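/- For θ ≤ θ* in (0,1), the randomized UMP p-value P_T^{rand} in the binomial model with n trials satisfies Prob_θ(P_T^{rand} ≤ t·τ) ≤ t·Prob_θ(P_T^{rand} ≤ τ) for all t ∈ [0,1] and τ ∈ (0,1]; i.e., P_T^{rand} is uniformly valid on the null hypothesis H: θ ≤ θ*. -/

import Mathlib

/-!
Conditionally on `T = k`, the p-value is uniform on `[S(k+1), S(k)]`, where `S(k) = P_{θ*}(T ≥ k)`,
and these intervals tile `[0, 1]`. Hence its CDF under `θ` is
`G(c) = ∑ₖ wₖ (min c S(k) - min c S(k+1))` with the likelihood ratio `wₖ = f_θ(k) / f_{θ*}(k)`,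
which decreases in `k` when `θ ≤ θ*` (monotone likelihood ratio). Each `c ↦ min c S(k)` is
superhomogeneous, `Dₖ = min (t c) S(k) - t min c S(k) ≥ 0`, with `D₀ = 0` because `S(0) = 1 ≥ c`;
summation by parts writes `t G(c) - G(t c) = ∑ₖ wₖ (Dₖ₊₁ - Dₖ)` as a nonnegative combination of
the `Dₖ`, so `G(t c) ≤ t G(c)`.
-/

open MeasureTheory Set ProbabilityTheory

def binPMF (n : ℕ) (θ : ℝ) (k : ℕ) : ℝ := (n.choose k : ℝ) * θ ^ k * (1 - θ) ^ (n - k)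

def binCDF (n : ℕ) (θ : ℝ) (k : ℕ) : ℝ := ∑ j ∈ Finset.range (k + 1), binPMF n θ j

section Binomial

lemma binPMF_nonneg {n : ℕ} {θ : ℝ} (h0 : 0 ≤ θ) (h1 : θ ≤ 1) (k : ℕ) : 0 ≤ binPMF n θ k := by
  have : 0 ≤ 1 - θ := by linarith
  unfold binPMF; positivity

lemma binPMF_pos {n k : ℕ} {θ : ℝ} (hθ : θ ∈ Ioo (0:ℝ) 1) (hk : k ≤ n) : 0 < binPMF n θ k := by
  have : 0 < 1 - θ := by linarith [hθ.2]
  have : 0 < (n.choose k : ℝ) := by exact_mod_cast Nat.choose_pos hk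
  have := hθ.1
  unfold binPMF; positivity

lemma binPMF_eq_zero_of_lt {n k : ℕ} (θ : ℝ) (hk : n < k) : binPMF n θ k = 0 := by
  simp [binPMF, Nat.choose_eq_zero_of_lt hk]

lemma sum_range_binPMF (n : ℕ) (θ : ℝ) : ∑ j ∈ Finset.range (n + 1), binPMF n θ j = 1 := by
  have h := add_pow θ (1 - θ) n
  rw [add_sub_cancel, one_pow] at h
  rw [h]
  exact Finset.sum_congr rfl fun j _ => by unfold binPMF; ring

lemma sum_range_binPMF_le_one {n : ℕ} {θ : ℝ} (h0 : 0 ≤ θ) (h1 : θ ≤ 1) (k : ℕ) :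
    ∑ j ∈ Finset.range k, binPMF n θ j ≤ 1 := by
  calc ∑ j ∈ Finset.range k, binPMF n θ j
      ≤ ∑ j ∈ Finset.range (max k (n + 1)), binPMF n θ j :=
        Finset.sum_le_sum_of_subset_of_nonneg (Finset.range_mono (le_max_left _ _))
          fun j _ _ => binPMF_nonneg h0 h1 j
    _ = ∑ j ∈ Finset.range (n + 1), binPMF n θ j := by
        refine (Finset.sum_subset (Finset.range_mono (le_max_right _ _)) fun j _ hj => ?_).symm
        exact binPMF_eq_zero_of_lt θ (by simpa using hj)
    _ = 1 := sum_range_binPMF n θ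

def binTail (n : ℕ) (θ : ℝ) (k : ℕ) : ℝ := 1 - ∑ j ∈ Finset.range k, binPMF n θ j

lemma binTail_zero (n : ℕ) (θ : ℝ) : binTail n θ 0 = 1 := by
  simp [binTail]

lemma binTail_succ (n : ℕ) (θ : ℝ) (k : ℕ) : binTail n θ (k + 1) = 1 - binCDF n θ k := rfl

lemma binTail_eq_binTail_succ_add (n : ℕ) (θ : ℝ) (k : ℕ) :
    binTail n θ k = binTail n θ (k + 1) + binPMF n θ k := by
  simp only [binTail, Finset.sum_range_succ]; ring

lemma binTail_nonneg {n : ℕ} {θ : ℝ} (h0 : 0 ≤ θ) (h1 : θ ≤ 1) (k : ℕ) : 0 ≤ binTail n θ k :=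
  sub_nonneg.mpr (sum_range_binPMF_le_one h0 h1 k)

/-- The likelihood ratio `f_θ(k) / f_{θ*}(k)`, in product form so that it is antitone on all of
`ℕ` (the quotient would be `0 / 0` for `k > n`). -/
noncomputable def binLR (n : ℕ) (θ θstar : ℝ) (k : ℕ) : ℝ :=
  (θ / θstar) ^ k * ((1 - θ) / (1 - θstar)) ^ (n - k)

lemma binPMF_eq_binLR_mul {θstar : ℝ} (h0 : θstar ≠ 0) (h1 : θstar ≠ 1) (n : ℕ) (θ : ℝ) (k : ℕ) :
    binPMF n θ k = binLR n θ θstar k * binPMF n θstar k := by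
  have : 1 - θstar ≠ 0 := sub_ne_zero.mpr h1.symm
  unfold binPMF binLR
  rw [div_pow, div_pow]
  field_simp

lemma binLR_nonneg {n : ℕ} {θ θstar : ℝ} (h0 : 0 ≤ θ) (h1 : θ ≤ 1) (h0' : 0 ≤ θstar)
    (h1' : θstar < 1) (k : ℕ) : 0 ≤ binLR n θ θstar k := by
  have : 0 ≤ 1 - θ := by linarith
  have : 0 < 1 - θstar := by linarith
  unfold binLR; positivity

lemma binLR_antitone {n : ℕ} {θ θstar : ℝ} (h0 : 0 ≤ θ) (hle : θ ≤ θstar) (h1 : θstar < 1) :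
    Antitone (binLR n θ θstar) := by
  refine antitone_nat_of_succ_le fun k => ?_
  have hA0 : 0 ≤ θ / θstar := div_nonneg h0 (h0.trans hle)
  have hA1 : θ / θstar ≤ 1 := div_le_one_of_le₀ hle (h0.trans hle)
  have hB : 1 ≤ (1 - θ) / (1 - θstar) := (one_le_div (by linarith)).mpr (by linarith)
  calc binLR n θ θstar (k + 1)
      = (θ / θstar) ^ k * (θ / θstar * ((1 - θ) / (1 - θstar)) ^ (n - (k + 1))) := by
        unfold binLR; ring
    _ ≤ (θ / θstar) ^ k * ((1 - θ) / (1 - θstar)) ^ (n - k) := by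
        gcongr
        calc θ / θstar * ((1 - θ) / (1 - θstar)) ^ (n - (k + 1))
            ≤ ((1 - θ) / (1 - θstar)) ^ (n - (k + 1)) :=
              mul_le_of_le_one_left (by positivity) hA1
          _ ≤ ((1 - θ) / (1 - θstar)) ^ (n - k) := pow_le_pow_right₀ hB (by omega)

end Binomial

section StarShaped

lemma mul_le_sum_mul_sub_of_antitone {w D : ℕ → ℝ} (hw : Antitone w) (hD : ∀ k, 0 ≤ D k)
    (hD0 : D 0 = 0) (m : ℕ) :
    w m * D m ≤ ∑ k ∈ Finset.range m, w k * (D (k + 1) - D k) := by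
  induction m with
  | zero => simp [hD0]
  | succ m ih =>
    rw [Finset.sum_range_succ]
    nlinarith [mul_le_mul_of_nonneg_right (hw m.le_succ) (hD (m + 1))]

lemma mul_min_le_min_mul {t c x : ℝ} (ht : t ∈ Icc (0:ℝ) 1) (hc : 0 ≤ c) (hx : 0 ≤ x) :
    t * min c x ≤ min (t * c) x :=
  le_min (mul_le_mul_of_nonneg_left (min_le_left _ _) ht.1)
    (mul_le_of_le_one_left (le_min hc hx) ht.2 |>.trans (min_le_right _ _))

lemma sum_mul_min_sub_min_mul_le {w u : ℕ → ℝ} (hw : Antitone w) (hu : ∀ k, 0 ≤ u k)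
    {m : ℕ} (hwm : 0 ≤ w m) {c t : ℝ} (hc : 0 ≤ c) (hcu : c ≤ u 0) (ht : t ∈ Icc (0:ℝ) 1) :
    ∑ k ∈ Finset.range m, w k * (min (t * c) (u k) - min (t * c) (u (k + 1)))
      ≤ t * ∑ k ∈ Finset.range m, w k * (min c (u k) - min c (u (k + 1))) := by
  set D : ℕ → ℝ := fun k => min (t * c) (u k) - t * min c (u k)
  have hD : ∀ k, 0 ≤ D k := fun k => sub_nonneg.mpr (mul_min_le_min_mul ht hc (hu k))
  have hD0 : D 0 = 0 := by
    simp only [D, min_eq_left hcu, min_eq_left ((mul_le_of_le_one_left hc ht.2).trans hcu),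
      sub_self]
  have hdiff : t * ∑ k ∈ Finset.range m, w k * (min c (u k) - min c (u (k + 1)))
      - ∑ k ∈ Finset.range m, w k * (min (t * c) (u k) - min (t * c) (u (k + 1)))
      = ∑ k ∈ Finset.range m, w k * (D (k + 1) - D k) := by
    rw [Finset.mul_sum, ← Finset.sum_sub_distrib]
    exact Finset.sum_congr rfl fun k _ => by simp only [D]; ring
  nlinarith [mul_le_sum_mul_sub_of_antitone hw hD hD0 m, mul_nonneg hwm (hD m)]

end StarShaped

section PValueLaw

noncomputable def randPValueCDF (n : ℕ) (θ θstar c : ℝ) : ℝ :=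
  ∑ k ∈ Finset.range (n + 1),
    binLR n θ θstar k * (min c (binTail n θstar k) - min c (binTail n θstar (k + 1)))

lemma randPValueCDF_mul_le {n : ℕ} {θ θstar : ℝ} (hθ : θ ∈ Ioo (0:ℝ) 1)
    (hθstar : θstar ∈ Ioo (0:ℝ) 1) (hnull : θ ≤ θstar) {c t : ℝ} (hc : c ∈ Icc (0:ℝ) 1)
    (ht : t ∈ Icc (0:ℝ) 1) :
    randPValueCDF n θ θstar (t * c) ≤ t * randPValueCDF n θ θstar c :=
  sum_mul_min_sub_min_mul_le (binLR_antitone hθ.1.le hnull hθstar.2)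
    (binTail_nonneg hθstar.1.le hθstar.2.le)
    (binLR_nonneg hθ.1.le hθ.2.le hθstar.1.le hθstar.2 _)
    hc.1 (binTail_zero n θstar ▸ hc.2) ht

lemma measure_affine_le_of_map_eq_uniform {Ω : Type*} [MeasurableSpace Ω] {μ : Measure Ω}
    {U : Ω → ℝ} (hU : Measurable U) (hunif : μ.map U = volume.restrict (Icc (0:ℝ) 1))
    {a f : ℝ} (hf : 0 < f) (c : ℝ) :
    μ (U ⁻¹' {x | a + x * f ≤ c}) = ENNReal.ofReal ((min c (a + f) - min c a) / f) := by
  have hset : {x : ℝ | a + x * f ≤ c} = Iic ((c - a) / f) := by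
    ext x
    rw [mem_ofPred_eq, mem_Iic, le_div_iff₀ hf]
    constructor <;> intro h <;> linarith
  have hinter : Iic ((c - a) / f) ∩ Icc (0:ℝ) 1 = Icc 0 (min ((c - a) / f) 1) := by
    ext y
    simp only [mem_inter_iff, mem_Iic, mem_Icc, le_min_iff]
    tauto
  rw [hset, ← Measure.map_apply hU measurableSet_Iic, hunif,
    Measure.restrict_apply measurableSet_Iic, hinter, Real.volume_Icc, sub_zero]
  rcases le_total c a with hca | hac
  · rw [ENNReal.ofReal_of_nonpos (min_le_of_left_le (div_nonpos_of_nonpos_of_nonneg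
      (by linarith) hf.le)), min_eq_left (by linarith), min_eq_left hca, sub_self, zero_div,
      ENNReal.ofReal_zero]
  rcases le_total c (a + f) with hcf | hfc
  · rw [min_eq_left ((div_le_one hf).mpr (by linarith)), min_eq_left hcf, min_eq_right hac]
  · rw [min_eq_right ((one_le_div hf).mpr (by linarith)), min_eq_right hfc, min_eq_right hac,
      add_sub_cancel_left, div_self hf.ne']

variable {Ω : Type*} [MeasurableSpace Ω] {μ : Measure Ω} {n : ℕ} {θ θstar : ℝ} {T : Ω → ℕ}
  {U : Ω → ℝ}

lemma measure_preimage_singleton_inter_randPValue_le (hθ : θ ∈ Ioo (0:ℝ) 1)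
    (hθstar : θstar ∈ Ioo (0:ℝ) 1)
    (hTlaw : ∀ k : ℕ, μ {ω | T ω = k} = ENNReal.ofReal (binPMF n θ k))
    (hUmeas : Measurable U) (hUunif : μ.map U = volume.restrict (Icc (0:ℝ) 1))
    (hindep : IndepFun T U μ) {k : ℕ} (hk : k ≤ n) (c : ℝ) :
    μ (T ⁻¹' {k} ∩ U ⁻¹' {x | binTail n θstar (k + 1) + x * binPMF n θstar k ≤ c})
      = ENNReal.ofReal (binLR n θ θstar k *
          (min c (binTail n θstar k) - min c (binTail n θstar (k + 1)))) := by
  have hf : 0 < binPMF n θstar k := binPMF_pos hθstar hk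
  rw [hindep.measure_inter_preimage_eq_mul _ _ (measurableSet_singleton k)
      (measurableSet_le (by fun_prop) measurable_const),
    measure_affine_le_of_map_eq_uniform hUmeas hUunif hf, ← binTail_eq_binTail_succ_add]
  change μ {ω | T ω = k} * _ = _
  rw [hTlaw, ← ENNReal.ofReal_mul (binPMF_nonneg hθ.1.le hθ.2.le k),
    binPMF_eq_binLR_mul hθstar.1.ne' hθstar.2.ne, mul_assoc, mul_div_cancel₀ _ hf.ne']

lemma measure_randPValue_le (hθ : θ ∈ Ioo (0:ℝ) 1) (hθstar : θstar ∈ Ioo (0:ℝ) 1)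
    (hTmeas : Measurable T) (hTlaw : ∀ k : ℕ, μ {ω | T ω = k} = ENNReal.ofReal (binPMF n θ k))
    (hUmeas : Measurable U) (hUunif : μ.map U = volume.restrict (Icc (0:ℝ) 1))
    (hindep : IndepFun T U μ) {P : Ω → ℝ}
    (hP : ∀ ω, P ω = 1 - binCDF n θstar (T ω) + U ω * binPMF n θstar (T ω)) (c : ℝ) :
    μ {ω | P ω ≤ c} = ENNReal.ofReal (randPValueCDF n θ θstar c) := by
  set B : ℕ → Set Ω := fun k =>
    T ⁻¹' {k} ∩ U ⁻¹' {x | binTail n θstar (k + 1) + x * binPMF n θstar k ≤ c}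
  have hunion : {ω | P ω ≤ c} = ⋃ k, B k := by
    ext ω
    simp [B, hP, binTail_succ]
  have hB : ∀ k, MeasurableSet (B k) := fun k =>
    (hTmeas (measurableSet_singleton k)).inter
      (hUmeas (measurableSet_le (by fun_prop) measurable_const))
  have hdisj : Pairwise (Function.onFun Disjoint B) := fun i j hij =>
    (Set.disjoint_singleton.mpr hij).preimage T |>.mono inter_subset_left inter_subset_left
  have htail : ∀ k ∉ Finset.range (n + 1), μ (B k) = 0 := fun k hk =>
    measure_mono_null inter_subset_left <| by
      change μ {ω | T ω = k} = 0
      rw [hTlaw, binPMF_eq_zero_of_lt θ (by simpa using hk), ENNReal.ofReal_zero]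
  have hterm_nonneg : ∀ k ∈ Finset.range (n + 1), 0 ≤ binLR n θ θstar k *
      (min c (binTail n θstar k) - min c (binTail n θstar (k + 1))) := fun k _ =>
    mul_nonneg (binLR_nonneg hθ.1.le hθ.2.le hθstar.1.le hθstar.2 k) <| sub_nonneg.mpr <|
      min_le_min_left c <| by
        linarith [binTail_eq_binTail_succ_add n θstar k,
          binPMF_nonneg (n := n) hθstar.1.le hθstar.2.le k]
  rw [hunion, measure_iUnion hdisj hB, tsum_eq_sum htail, randPValueCDF,
    ENNReal.ofReal_sum_of_nonneg hterm_nonneg]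
  exact Finset.sum_congr rfl fun k hk => measure_preimage_singleton_inter_randPValue_le hθ hθstar
    hTlaw hUmeas hUunif hindep (Nat.lt_succ_iff.mp (Finset.mem_range.mp hk)) c

end PValueLaw

theorem stmt_13_general {Ω : Type*} [MeasurableSpace Ω] (μ : Measure Ω)
    (n : ℕ) (θ θstar : ℝ) (hθ : θ ∈ Ioo (0:ℝ) 1) (hθstar : θstar ∈ Ioo (0:ℝ) 1)
    (hnull : θ ≤ θstar)
    (T : Ω → ℕ) (hTmeas : Measurable T)
    (hTlaw : ∀ k : ℕ, μ {ω | T ω = k} = ENNReal.ofReal (binPMF n θ k))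
    (U : Ω → ℝ) (hUmeas : Measurable U)
    (hUunif : μ.map U = volume.restrict (Icc (0:ℝ) 1))
    (hindep : IndepFun T U μ)
    (P : Ω → ℝ)
    (hP : ∀ ω, P ω = 1 - binCDF n θstar (T ω) + U ω * binPMF n θstar (T ω)) :
    ∀ t ∈ Icc (0:ℝ) 1, ∀ τ ∈ Ioc (0:ℝ) 1,
      μ {ω | P ω ≤ t * τ} ≤ ENNReal.ofReal t * μ {ω | P ω ≤ τ} := by
  intro t ht τ hτ
  have hlaw := measure_randPValue_le hθ hθstar hTmeas hTlaw hUmeas hUunif hindep hP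
  rw [hlaw, hlaw, ← ENNReal.ofReal_mul ht.1]
  exact ENNReal.ofReal_le_ofReal
    (randPValueCDF_mul_le hθ hθstar hnull ⟨hτ.1.le, hτ.2⟩ ht)

/-- Uniform validity of the randomized UMP p-value
`P_T^{rand} = 1 - F_{θ*}(T) + U·f_{θ*}(T)` in the binomial model on the null `θ ≤ θ*`:
`Prob_θ(P_T^{rand} ≤ t·τ) ≤ t·Prob_θ(P_T^{rand} ≤ τ)` for all `t ∈ [0,1]`, `τ ∈ (0,1]`. -/
theorem stmt_13 {Ω : Type*} [MeasurableSpace Ω] (μ : Measure Ω) [IsProbabilityMeasure μ]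
    (n : ℕ) (θ θstar : ℝ) (hθ : θ ∈ Ioo (0:ℝ) 1) (hθstar : θstar ∈ Ioo (0:ℝ) 1)
    (hnull : θ ≤ θstar)
    (T : Ω → ℕ) (hTmeas : Measurable T)
    (hTlaw : ∀ k : ℕ, μ {ω | T ω = k} = ENNReal.ofReal (binPMF n θ k))
    (U : Ω → ℝ) (hUmeas : Measurable U)
    (hUunif : μ.map U = volume.restrict (Icc (0:ℝ) 1))
    (hindep : IndepFun T U μ)
    (P : Ω → ℝ)
    (hP : ∀ ω, P ω = 1 - binCDF n θstar (T ω) + U ω * binPMF n θstar (T ω)) :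
    ∀ t ∈ Icc (0:ℝ) 1, ∀ τ ∈ Ioc (0:ℝ) 1,
      μ {ω | P ω ≤ t * τ} ≤ ENNReal.ofReal t * μ {ω | P ω ≤ τ} :=
  stmt_13_general μ n θ θstar hθ hθstar hnull T hTmeas hTlaw U hUmeas hUunif hindep P hP
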